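/- Let n ≥ 1 and let a_1, ..., a_n, b_0, ..., b_n, v be real numbers with b_i ≥ v for all 0 ≤ i ≤ n, b_i ≤ v + H for all i (for some H ≥ 0), a_i ≥ 1 for all i, and a_{i+1} - a_i ≤ η·a_i + 1 for all 1 ≤ i ≤ n-1 (for some η > 0). Then Σ_{i=1}^n a_i·(b_{i-1} - b_i) ≤ a_1·(b_0 - v) + η·Σ_{i=1}^{n-1} a_i·(b_i - v) + n·H. -/

import Mathlib

/-! Summation by parts turns the weighted telescoping sum into
`a₁ (b₀ - v) + ∑_{i<n} (a_{i+1} - a_i)(b_i - v) - a_n (b_n - v)`. The growth condition bounds each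
increment term by `η a_i (b_i - v) + H`, since `0 ≤ b_i - v ≤ H`, and the last term is nonpositive. -/

open Finset

theorem sum_Icc_mul_sub_eq_sum_by_parts {R : Type*} [CommRing R] (a b : ℕ → R) (v : R) (m : ℕ) :
    ∑ i ∈ Icc 1 (m + 1), a i * (b (i - 1) - b i) =
      a 1 * (b 0 - v) + ∑ i ∈ Icc 1 m, (a (i + 1) - a i) * (b i - v)
        - a (m + 1) * (b (m + 1) - v) := by
  induction m with
  | zero => simp only [zero_add, Icc_self, sum_singleton, Nat.sub_self, Icc_eq_empty_of_lt,
      zero_lt_one, sum_empty]; ring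
  | succ m ih =>
    rw [sum_Icc_succ_top (by omega), ih, sum_Icc_succ_top (by omega), Nat.add_sub_cancel]
    ring

theorem sum_Icc_increment_mul_le (a c : ℕ → ℝ) (η H : ℝ) (m : ℕ)
    (hstep : ∀ i ∈ Icc 1 m, a (i + 1) - a i ≤ η * a i + 1)
    (hc0 : ∀ i ∈ Icc 1 m, 0 ≤ c i) (hcH : ∀ i ∈ Icc 1 m, c i ≤ H) :
    ∑ i ∈ Icc 1 m, (a (i + 1) - a i) * c i ≤ η * ∑ i ∈ Icc 1 m, a i * c i + m * H := by
  calc ∑ i ∈ Icc 1 m, (a (i + 1) - a i) * c i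
      ≤ ∑ i ∈ Icc 1 m, (η * (a i * c i) + H) := by
        refine sum_le_sum fun i hi => ?_
        nlinarith [mul_le_mul_of_nonneg_right (hstep i hi) (hc0 i hi), hcH i hi]
    _ = η * ∑ i ∈ Icc 1 m, a i * c i + m * H := by
        simp [sum_add_distrib, mul_sum]

theorem weighted_telescoping_bound_general (n : ℕ) (hn : 1 ≤ n) (a b : ℕ → ℝ) (v H η : ℝ)
    (hH : 0 ≤ H)
    (hbv : ∀ i ≤ n, v ≤ b i)
    (hbH : ∀ i ≤ n, b i ≤ v + H)
    (ha1 : ∀ i, 1 ≤ i → i ≤ n → 1 ≤ a i)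
    (hstep : ∀ i, 1 ≤ i → i ≤ n - 1 → a (i + 1) - a i ≤ η * a i + 1) :
    ∑ i ∈ Finset.Icc 1 n, a i * (b (i - 1) - b i) ≤
      a 1 * (b 0 - v) + η * ∑ i ∈ Finset.Icc 1 (n - 1), a i * (b i - v) + n * H := by
  obtain ⟨m, rfl⟩ : ∃ m, n = m + 1 := ⟨n - 1, by omega⟩
  rw [sum_Icc_mul_sub_eq_sum_by_parts a b v, Nat.add_sub_cancel]
  have hinc := sum_Icc_increment_mul_le a (fun i => b i - v) η H m
    (fun i hi => hstep i (mem_Icc.1 hi).1 (by simpa using (mem_Icc.1 hi).2))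
    (fun i hi => sub_nonneg.2 (hbv i (by simp at hi; omega)))
    (fun i hi => by linarith [hbH i (by simp at hi; omega)])
  have hlast : 0 ≤ a (m + 1) * (b (m + 1) - v) :=
    mul_nonneg (by linarith [ha1 (m + 1) (by omega) le_rfl]) (sub_nonneg.2 (hbv _ le_rfl))
  push_cast
  linarith

theorem weighted_telescoping_bound (n : ℕ) (hn : 1 ≤ n) (a b : ℕ → ℝ) (v H η : ℝ)
    (hH : 0 ≤ H) (hη : 0 < η)
    (hbv : ∀ i ≤ n, v ≤ b i)
    (hbH : ∀ i ≤ n, b i ≤ v + H)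
    (ha1 : ∀ i, 1 ≤ i → i ≤ n → 1 ≤ a i)
    (hstep : ∀ i, 1 ≤ i → i ≤ n - 1 → a (i + 1) - a i ≤ η * a i + 1) :
    ∑ i ∈ Finset.Icc 1 n, a i * (b (i - 1) - b i) ≤
      a 1 * (b 0 - v) + η * ∑ i ∈ Finset.Icc 1 (n - 1), a i * (b i - v) + n * H :=
  weighted_telescoping_bound_general n hn a b v H η hH hbv hbH ha1 hstep
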